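/- Let X be uniform on the unit circle, and compare (i) 1-bit quantization with 1-bit of common randomness (M=2, N=2), achieving distortion D₁(P) = 1 − 4/π² + [max(√(1 − 4(2√2−1)/π²) − √P, 0)]², against (ii) 2-bit quantization without common randomness (M=4, N=1), achieving D₂(P) = 1 − 8/π² + [max(√(1 − 8/π²) − √P, 0)]². Then D₂(P) < D₁(P) for all P ≥ 0. -/

import Mathlib

/-!
With `D + (max (√W - √P) 0)²` the distortion of a scheme whose reconstruction has mean squared
error `D` and squared Wasserstein distance `W` to the source, the claim reduces to
`4/π² < 8/π²` on the error term and `4(2√2 - 1) ≤ 8` on the Wasserstein term, since the tradeoff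
is strictly increasing in `D` and nondecreasing in `W`.
-/

open Real

noncomputable def distortionPerceptionTradeoff (D W P : ℝ) : ℝ :=
  D + (max (√W - √P) 0) ^ 2

theorem distortionPerceptionTradeoff_mono_right (D P : ℝ) :
    Monotone fun W => distortionPerceptionTradeoff D W P := by
  intro W₁ W₂ hW
  dsimp only [distortionPerceptionTradeoff]
  gcongr

theorem distortionPerceptionTradeoff_lt_of_lt_of_le {D₁ D₂ W₁ W₂ : ℝ} (P : ℝ)
    (hD : D₁ < D₂) (hW : W₁ ≤ W₂) :
    distortionPerceptionTradeoff D₁ W₁ P < distortionPerceptionTradeoff D₂ W₂ P :=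
  calc distortionPerceptionTradeoff D₁ W₁ P
      < distortionPerceptionTradeoff D₂ W₁ P := by
        unfold distortionPerceptionTradeoff; linarith
    _ ≤ distortionPerceptionTradeoff D₂ W₂ P := distortionPerceptionTradeoff_mono_right D₂ P hW

theorem two_mul_sqrt_two_sub_one_le_two : 2 * √2 - 1 ≤ 2 := by
  have h : √2 ≤ 3 / 2 := Real.sqrt_le_iff.mpr ⟨by norm_num, by norm_num⟩
  linarith

theorem stmt12 (P : ℝ) :
    1 - 8 / π ^ 2 + (max (Real.sqrt (1 - 8 / π ^ 2) - Real.sqrt P) 0) ^ 2 <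
      1 - 4 / π ^ 2 +
        (max (Real.sqrt (1 - 4 * (2 * Real.sqrt 2 - 1) / π ^ 2) - Real.sqrt P) 0) ^ 2 := by
  have hD : 1 - 8 / π ^ 2 < 1 - 4 / π ^ 2 := by gcongr; norm_num
  have hW : 1 - 8 / π ^ 2 ≤ 1 - 4 * (2 * √2 - 1) / π ^ 2 := by
    gcongr; linarith [two_mul_sqrt_two_sub_one_le_two]
  exact distortionPerceptionTradeoff_lt_of_lt_of_le P hD hW
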